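/- arXiv:2402.15762 — 3 statements merged into one kernel-verified Lean document; each statement's English description precedes it below -/
import Mathlib

section
/- Let Ω ⊆ ℝⁿ be a measurable set (with Lebesgue measure), let γ ∈ (1,2], and let β : ℝ → ℝ satisfy |β(s)| ≤ M for all s and |β(s) − β(r)| ≤ L|s − r| for all s, r, with M, L ≥ 0. Let u : ℝⁿ → ℝ be differentiable at every point of Ω with ∫_Ω |∇u(x)|² dx < ∞, and let v : Ω → ℝ be measurable with ∫_Ω |u(x) − v(x)|² dx < ∞. Then ∫_Ω |β(u(x)) − β(v(x))|² |∇u(x)|^{2(2−γ)} dx ≤ (2M)^{2(2−γ)} L^{2(γ−1)} (∫_Ω |∇u(x)|² dx)^{2−γ} (∫_Ω |u(x) − v(x)|² dx)^{γ−1}. -/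
/-!
Write `|β(u) − β(v)|² = |β(u) − β(v)|^(2(2−γ)) · |β(u) − β(v)|^(2(γ−1))` and bound the first factor
by `(2M)^(2(2−γ))` and the second by `(L|u − v|)^(2(γ−1))`. The integrand is then at most a constant
times `(|∇u|²)^(2−γ) (|u − v|²)^(γ−1)`, and Hölder's inequality with the exponents `2 − γ` and
`γ − 1`, which sum to `1`, finishes the proof.
-/

open MeasureTheory Real

section HolderInterpolation

variable {α : Type*} [MeasurableSpace α] {μ : Measure α} {f g : α → ℝ} {p q : ℝ}

theorem integrable_rpow_mul_rpow (hf : Integrable f μ) (hg : Integrable g μ)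
    (hf₀ : 0 ≤ᵐ[μ] f) (hg₀ : 0 ≤ᵐ[μ] g) (hp : 0 ≤ p) (hq : 0 ≤ q) (hpq : p + q = 1) :
    Integrable (fun a => f a ^ p * g a ^ q) μ := by
  refine ((hf.const_mul p).add (hg.const_mul q)).mono'
    ((hf.aemeasurable.pow_const p).mul (hg.aemeasurable.pow_const q)).aestronglyMeasurable ?_
  filter_upwards [hf₀, hg₀] with a hfa hga
  rw [Real.norm_of_nonneg (mul_nonneg (rpow_nonneg hfa p) (rpow_nonneg hga q))]
  exact geom_mean_le_arith_mean2_weighted hp hq hfa hga hpq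

theorem integral_rpow_mul_rpow_le (hf : Integrable f μ) (hg : Integrable g μ)
    (hf₀ : 0 ≤ᵐ[μ] f) (hg₀ : 0 ≤ᵐ[μ] g) (hp : 0 ≤ p) (hq : 0 ≤ q) (hpq : p + q = 1) :
    ∫ a, f a ^ p * g a ^ q ∂μ ≤ (∫ a, f a ∂μ) ^ p * (∫ a, g a ∂μ) ^ q := by
  have hofReal : (fun a => ENNReal.ofReal (f a ^ p * g a ^ q)) =ᵐ[μ]
      fun a => ENNReal.ofReal (f a) ^ p * ENNReal.ofReal (g a) ^ q := by
    filter_upwards [hf₀, hg₀] with a hfa hga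
    rw [ENNReal.ofReal_mul (rpow_nonneg hfa p), ENNReal.ofReal_rpow_of_nonneg hfa hp,
      ENNReal.ofReal_rpow_of_nonneg hga hq]
  have hF₀ : 0 ≤ᵐ[μ] fun a => f a ^ p * g a ^ q := by
    filter_upwards [hf₀, hg₀] with a hfa hga
    exact mul_nonneg (rpow_nonneg hfa p) (rpow_nonneg hga q)
  have hholder := ENNReal.lintegral_mul_norm_pow_le hf.aemeasurable.ennreal_ofReal
    hg.aemeasurable.ennreal_ofReal hp hq hpq
  rw [integral_eq_lintegral_of_nonneg_ae hF₀
      (integrable_rpow_mul_rpow hf hg hf₀ hg₀ hp hq hpq).aestronglyMeasurable,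
    integral_eq_lintegral_of_nonneg_ae hf₀ hf.aestronglyMeasurable,
    integral_eq_lintegral_of_nonneg_ae hg₀ hg.aestronglyMeasurable,
    ENNReal.toReal_rpow, ENNReal.toReal_rpow, ← ENNReal.toReal_mul, lintegral_congr_ae hofReal]
  exact ENNReal.toReal_mono (ENNReal.mul_ne_top
    (ENNReal.rpow_ne_top_of_nonneg hp hf.lintegral_lt_top.ne)
    (ENNReal.rpow_ne_top_of_nonneg hq hg.lintegral_lt_top.ne)) hholder

end HolderInterpolation

theorem sq_le_rpow_mul_rpow_of_le_of_le {d A B p q : ℝ} (hd : 0 ≤ d) (hA : d ≤ A) (hB : d ≤ B)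
    (hp : 0 ≤ p) (hq : 0 ≤ q) (hpq : p + q = 1) :
    d ^ 2 ≤ A ^ (2 * p) * B ^ (2 * q) := by
  calc d ^ 2 = d ^ (2 * p) * d ^ (2 * q) := by
        rw [← rpow_add' hd (by rw [← mul_add, hpq]; norm_num), ← mul_add, hpq, mul_one,
          rpow_two]
    _ ≤ A ^ (2 * p) * B ^ (2 * q) := by
        have hd_le_A : d ^ (2 * p) ≤ A ^ (2 * p) := rpow_le_rpow hd hA (by positivity)
        have hd_le_B : d ^ (2 * q) ≤ B ^ (2 * q) := rpow_le_rpow hd hB (by positivity)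
        exact mul_le_mul hd_le_A hd_le_B (rpow_nonneg hd _) ((rpow_nonneg hd _).trans hd_le_A)

theorem sq_abs_sub_le_of_abs_le_of_lipschitz {β : ℝ → ℝ} {M L p q : ℝ} (hL : 0 ≤ L)
    (hβM : ∀ s, |β s| ≤ M) (hβL : ∀ s r, |β s - β r| ≤ L * |s - r|)
    (hp : 0 ≤ p) (hq : 0 ≤ q) (hpq : p + q = 1) (s r : ℝ) :
    |β s - β r| ^ 2 ≤ (2 * M) ^ (2 * p) * L ^ (2 * q) * ((s - r) ^ 2) ^ q := by
  have hbound : |β s - β r| ≤ 2 * M := by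
    linarith [abs_sub (β s) (β r), hβM s, hβM r]
  calc |β s - β r| ^ 2 ≤ (2 * M) ^ (2 * p) * (L * |s - r|) ^ (2 * q) :=
        sq_le_rpow_mul_rpow_of_le_of_le (abs_nonneg _) hbound (hβL s r) hp hq hpq
    _ = (2 * M) ^ (2 * p) * L ^ (2 * q) * ((s - r) ^ 2) ^ q := by
        rw [mul_rpow hL (abs_nonneg _), mul_assoc, rpow_mul (abs_nonneg _), rpow_two, sq_abs]

theorem beta_gradient_interpolation_general (n : ℕ) (Ω : Set (EuclideanSpace ℝ (Fin n)))
    (γ M L : ℝ) (hγ₁ : 1 < γ) (hγ₂ : γ ≤ 2)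
    (hM : 0 ≤ M) (hL : 0 ≤ L)
    (β : ℝ → ℝ) (hβM : ∀ s, |β s| ≤ M) (hβL : ∀ s r, |β s - β r| ≤ L * |s - r|)
    (u v : EuclideanSpace ℝ (Fin n) → ℝ)
    (hu2 : IntegrableOn (fun x => ‖gradient u x‖ ^ 2) Ω)
    (huv : IntegrableOn (fun x => (u x - v x) ^ 2) Ω) :
    ∫ x in Ω, |β (u x) - β (v x)| ^ 2 * ‖gradient u x‖ ^ (2 * (2 - γ)) ≤
      (2 * M) ^ (2 * (2 - γ)) * L ^ (2 * (γ - 1)) *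
        (∫ x in Ω, ‖gradient u x‖ ^ 2) ^ (2 - γ) *
        (∫ x in Ω, (u x - v x) ^ 2) ^ (γ - 1) := by
  have hp : 0 ≤ 2 - γ := by linarith
  have hq : 0 ≤ γ - 1 := by linarith
  have hpq : 2 - γ + (γ - 1) = 1 := by ring
  set C := (2 * M) ^ (2 * (2 - γ)) * L ^ (2 * (γ - 1))
  have hC : 0 ≤ C := mul_nonneg (rpow_nonneg (by linarith) _) (rpow_nonneg hL _)
  have hu2₀ : 0 ≤ᵐ[volume.restrict Ω] fun x => ‖gradient u x‖ ^ 2 :=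
    ae_of_all _ fun _ => sq_nonneg _
  have huv₀ : 0 ≤ᵐ[volume.restrict Ω] fun x => (u x - v x) ^ 2 :=
    ae_of_all _ fun _ => sq_nonneg _
  have hpointwise : ∀ x, |β (u x) - β (v x)| ^ 2 * ‖gradient u x‖ ^ (2 * (2 - γ)) ≤
      C * ((‖gradient u x‖ ^ 2) ^ (2 - γ) * ((u x - v x) ^ 2) ^ (γ - 1)) := by
    intro x
    rw [rpow_mul (norm_nonneg _), rpow_two]
    calc _ ≤ C * ((u x - v x) ^ 2) ^ (γ - 1) * (‖gradient u x‖ ^ 2) ^ (2 - γ) :=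
          mul_le_mul_of_nonneg_right
            (sq_abs_sub_le_of_abs_le_of_lipschitz hL hβM hβL hp hq hpq (u x) (v x))
            (rpow_nonneg (sq_nonneg _) _)
      _ = _ := by ring
  calc _ ≤ ∫ x in Ω, C * ((‖gradient u x‖ ^ 2) ^ (2 - γ) * ((u x - v x) ^ 2) ^ (γ - 1)) :=
        integral_mono_of_nonneg
          (ae_of_all _ fun _ => mul_nonneg (sq_nonneg _) (rpow_nonneg (norm_nonneg _) _))
          ((integrable_rpow_mul_rpow hu2 huv hu2₀ huv₀ hp hq hpq).const_mul C)
          (ae_of_all _ hpointwise)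
    _ = C * ∫ x in Ω, (‖gradient u x‖ ^ 2) ^ (2 - γ) * ((u x - v x) ^ 2) ^ (γ - 1) :=
        integral_const_mul C _
    _ ≤ C * ((∫ x in Ω, ‖gradient u x‖ ^ 2) ^ (2 - γ) * (∫ x in Ω, (u x - v x) ^ 2) ^ (γ - 1)) :=
        mul_le_mul_of_nonneg_left (integral_rpow_mul_rpow_le hu2 huv hu2₀ huv₀ hp hq hpq) hC
    _ = _ := by ring

/-- Lemma 2.1 of the paper: for `γ ∈ (1,2]`, `β` bounded by `M` and `L`-Lipschitz,
`u` differentiable on `Ω` with square-integrable gradient and `v` measurable with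
`u − v` square integrable,
`∫_Ω |β(u) − β(v)|² |∇u|^(2(2−γ)) ≤ (2M)^(2(2−γ)) L^(2(γ−1)) (∫_Ω |∇u|²)^(2−γ) (∫_Ω |u−v|²)^(γ−1)`. -/
theorem beta_gradient_interpolation (n : ℕ) (Ω : Set (EuclideanSpace ℝ (Fin n)))
    (hΩ : MeasurableSet Ω) (γ M L : ℝ) (hγ₁ : 1 < γ) (hγ₂ : γ ≤ 2)
    (hM : 0 ≤ M) (hL : 0 ≤ L)
    (β : ℝ → ℝ) (hβM : ∀ s, |β s| ≤ M) (hβL : ∀ s r, |β s - β r| ≤ L * |s - r|)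
    (u v : EuclideanSpace ℝ (Fin n) → ℝ)
    (hu : ∀ x ∈ Ω, DifferentiableAt ℝ u x)
    (hu2 : IntegrableOn (fun x => ‖gradient u x‖ ^ 2) Ω)
    (hv : AEMeasurable v (volume.restrict Ω))
    (huv : IntegrableOn (fun x => (u x - v x) ^ 2) Ω) :
    ∫ x in Ω, |β (u x) - β (v x)| ^ 2 * ‖gradient u x‖ ^ (2 * (2 - γ)) ≤
      (2 * M) ^ (2 * (2 - γ)) * L ^ (2 * (γ - 1)) *
        (∫ x in Ω, ‖gradient u x‖ ^ 2) ^ (2 - γ) *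
        (∫ x in Ω, (u x - v x) ^ 2) ^ (γ - 1) :=
  beta_gradient_interpolation_general n Ω γ M L hγ₁ hγ₂ hM hL β hβM hβL u v hu2 huv
end

section
/- Let Ω ⊆ ℝⁿ be a measurable set of finite Lebesgue measure |Ω|, let γ ∈ (1,2], let ω : Ω → ℝⁿ be measurable with |ω(x)| ≤ W a.e. (W ≥ 0), let β : ℝ → ℝ satisfy |β(s)| ≤ M for all s (M ≥ 0), and let u : ℝⁿ → ℝ be differentiable at every point of Ω with ∫_Ω |∇u|² dx < ∞. Define f₂[u](x) := (ω(x)·∇u(x) + β(u(x)) |∇u(x)|^{2−γ})₋. Then ‖f₂[u]‖_{L²(Ω)} ≤ √2 ( W ‖∇u‖_{L²(Ω)} + M |Ω|^{(γ−1)/2} ‖∇u‖_{L²(Ω)}^{2−γ} ). -/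
open MeasureTheory Real

/-!
Pointwise `f₂[u] ≤ W |∇u| + M |∇u|^(2-γ)`, hence `f₂[u]² ≤ 2 (W² |∇u|² + M² (|∇u|²)^(2-γ))`.
Jensen's inequality for the concave map `t ↦ t^(2-γ)` on the finite measure space `Ω` gives
`∫ (|∇u|²)^(2-γ) ≤ |Ω|^(γ-1) (∫ |∇u|²)^(2-γ)`, and `√(2 (a² + b²)) ≤ √2 (a + b)` finishes.
-/

namespace MeasureTheory

variable {α : Type*} [MeasurableSpace α] {μ : Measure α} [IsFiniteMeasure μ] {h : α → ℝ} {θ : ℝ}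

theorem Integrable.rpow_of_nonneg_of_le_one (hi : Integrable h μ) (h0 : ∀ x, 0 ≤ h x)
    (hθ₀ : 0 ≤ θ) (hθ₁ : θ ≤ 1) : Integrable (fun x => h x ^ θ) μ := by
  have hLp := (memLp_one_iff_integrable.2 hi).norm_rpow_div (ENNReal.ofReal θ)
  simp only [ENNReal.toReal_ofReal hθ₀, Real.norm_of_nonneg (h0 _)] at hLp
  refine memLp_one_iff_integrable.1 (hLp.mono_exponent ?_)
  rcases hθ₀.eq_or_lt with rfl | hθ
  · simp
  · rw [ENNReal.le_div_iff_mul_le (by simp [hθ]) (by simp), one_mul]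
    exact ENNReal.ofReal_le_one.2 hθ₁

theorem integral_rpow_le_measureReal_rpow_mul (hi : Integrable h μ) (h0 : ∀ x, 0 ≤ h x)
    (hθ₀ : 0 ≤ θ) (hθ₁ : θ ≤ 1) :
    ∫ x, h x ^ θ ∂μ ≤ μ.real Set.univ ^ (1 - θ) * (∫ x, h x ∂μ) ^ θ := by
  rcases eq_zero_or_neZero μ with rfl | hμ
  · simp only [integral_zero_measure]
    exact mul_nonneg (rpow_nonneg (by simp) _) (rpow_nonneg le_rfl _)
  have hT : 0 < μ.real Set.univ := measureReal_univ_pos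
  have hJensen := (concaveOn_rpow hθ₀ hθ₁).le_map_average
    (continuousOn_id.rpow_const fun _ _ => Or.inr hθ₀) isClosed_Ici
    (Filter.Eventually.of_forall h0) hi (hi.rpow_of_nonneg_of_le_one h0 hθ₀ hθ₁)
  simp only [average_eq, smul_eq_mul] at hJensen
  rw [rpow_sub hT, rpow_one]
  rwa [mul_rpow (inv_nonneg.2 hT.le) (integral_nonneg h0), inv_rpow hT.le, inv_mul_le_iff₀ hT,
    ← mul_assoc, ← div_eq_mul_inv] at hJensen

end MeasureTheory

theorem max_neg_add_zero_sq_le {a b x y : ℝ} (ha : |a| ≤ x) (hb : |b| ≤ y) :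
    max (-(a + b)) 0 ^ 2 ≤ 2 * (x ^ 2 + y ^ 2) := by
  have hle : max (-(a + b)) 0 ≤ x + y :=
    max_le (by linarith [neg_abs_le a, neg_abs_le b]) (by linarith [abs_nonneg a, abs_nonneg b])
  nlinarith [le_max_right (-(a + b)) 0, sq_nonneg (x - y)]

theorem max_neg_inner_add_mul_rpow_sq_le {E : Type*} [NormedAddCommGroup E]
    [InnerProductSpace ℝ E] {w v : E} {W M b θ : ℝ} (hw : ‖w‖ ≤ W) (hb : |b| ≤ M) :
    max (-(inner ℝ w v + b * ‖v‖ ^ θ)) 0 ^ 2 ≤ 2 * (W ^ 2 * ‖v‖ ^ 2 + M ^ 2 * (‖v‖ ^ 2) ^ θ) := by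
  have hinner : |inner ℝ w v| ≤ W * ‖v‖ := (abs_real_inner_le_norm _ _).trans (by gcongr)
  have hconv : |b * ‖v‖ ^ θ| ≤ M * ‖v‖ ^ θ := by
    rw [abs_mul, abs_of_nonneg (rpow_nonneg (norm_nonneg _) _)]
    exact mul_le_mul_of_nonneg_right hb (rpow_nonneg (norm_nonneg _) _)
  simpa only [mul_pow, rpow_pow_comm (norm_nonneg _)] using max_neg_add_zero_sq_le hinner hconv

theorem rpow_half_le_sqrt_two_mul_add {I a b : ℝ} (ha : 0 ≤ a) (hb : 0 ≤ b)
    (hI : I ≤ 2 * (a ^ 2 + b ^ 2)) : I ^ (1 / 2 : ℝ) ≤ √2 * (a + b) := by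
  rw [← sqrt_eq_rpow, ← sqrt_sq (by positivity : 0 ≤ √2 * (a + b))]
  refine sqrt_le_sqrt (hI.trans ?_)
  rw [mul_pow, sq_sqrt zero_le_two]
  nlinarith [mul_nonneg ha hb]

theorem mul_rpow_half_sq {W G : ℝ} (hG : 0 ≤ G) : (W * G ^ (1 / 2 : ℝ)) ^ 2 = W ^ 2 * G := by
  rw [mul_pow, ← sqrt_eq_rpow, sq_sqrt hG]

theorem mul_rpow_div_two_mul_rpow_half_rpow_sq {M T G : ℝ} (hT : 0 ≤ T) (hG : 0 ≤ G) (s t : ℝ) :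
    (M * T ^ (s / 2) * (G ^ (1 / 2 : ℝ)) ^ t) ^ 2 = M ^ 2 * (T ^ s * G ^ t) := by
  rw [mul_pow, mul_pow, ← rpow_mul hG, ← rpow_mul_natCast hT, ← rpow_mul_natCast hG]
  ring_nf

theorem convective_term_L2_bound_general (n : ℕ) (Ω : Set (EuclideanSpace ℝ (Fin n)))
    (hΩfin : volume Ω < ⊤)
    (γ W M : ℝ) (hγ₁ : 1 < γ) (hγ₂ : γ ≤ 2) (hW : 0 ≤ W) (hM : 0 ≤ M)
    (ω : EuclideanSpace ℝ (Fin n) → EuclideanSpace ℝ (Fin n))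
    (hω : ∀ᵐ x ∂(volume.restrict Ω), ‖ω x‖ ≤ W)
    (β : ℝ → ℝ) (hβ : ∀ s, |β s| ≤ M)
    (u : EuclideanSpace ℝ (Fin n) → ℝ)
    (hu2 : IntegrableOn (fun x => ‖gradient u x‖ ^ 2) Ω) :
    (∫ x in Ω,
        (max (-((inner ℝ (ω x) (gradient u x) : ℝ) +
          β (u x) * ‖gradient u x‖ ^ (2 - γ))) 0) ^ 2) ^ ((1 : ℝ) / 2) ≤
      Real.sqrt 2 *
        (W * (∫ x in Ω, ‖gradient u x‖ ^ 2) ^ ((1 : ℝ) / 2) +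
          M * (volume Ω).toReal ^ ((γ - 1) / 2) *
            ((∫ x in Ω, ‖gradient u x‖ ^ 2) ^ ((1 : ℝ) / 2)) ^ (2 - γ)) := by
  have : IsFiniteMeasure (volume.restrict Ω) := isFiniteMeasure_restrict.2 hΩfin.ne
  set G := ∫ x in Ω, ‖gradient u x‖ ^ 2
  have hG : 0 ≤ G := integral_nonneg fun _ => sq_nonneg _
  have hT : 0 ≤ (volume Ω).toReal := ENNReal.toReal_nonneg
  have hθ₀ : 0 ≤ 2 - γ := by linarith
  have hθ₁ : 2 - γ ≤ 1 := by linarith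
  have hpow := hu2.rpow_of_nonneg_of_le_one (fun _ => sq_nonneg _) hθ₀ hθ₁
  refine rpow_half_le_sqrt_two_mul_add (by positivity) (by positivity) ?_
  rw [mul_rpow_half_sq hG, mul_rpow_div_two_mul_rpow_half_rpow_sq hT hG]
  -- `β` is arbitrary, so `f₂[u]` may fail to be integrable; its integral is then the junk value 0,
  -- which `integral_mono_of_nonneg` covers.
  calc _ ≤ ∫ x in Ω, 2 * (W ^ 2 * ‖gradient u x‖ ^ 2 + M ^ 2 * (‖gradient u x‖ ^ 2) ^ (2 - γ)) :=
        integral_mono_of_nonneg (ae_of_all _ fun _ => sq_nonneg _)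
          (((hu2.const_mul _).add (hpow.const_mul _)).const_mul 2)
          (by filter_upwards [hω] with x hx using max_neg_inner_add_mul_rpow_sq_le hx (hβ _))
    _ = 2 * (W ^ 2 * G + M ^ 2 * ∫ x in Ω, (‖gradient u x‖ ^ 2) ^ (2 - γ)) := by
        rw [integral_const_mul, integral_add (hu2.const_mul _) (hpow.const_mul _),
          integral_const_mul, integral_const_mul]
    _ ≤ 2 * (W ^ 2 * G + M ^ 2 * ((volume Ω).toReal ^ (γ - 1) * G ^ (2 - γ))) := by
        have hJensen := integral_rpow_le_measureReal_rpow_mul hu2 (fun _ => sq_nonneg _) hθ₀ hθ₁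
        rw [measureReal_restrict_apply_univ, measureReal_def,
          show 1 - (2 - γ) = γ - 1 by ring] at hJensen
        gcongr

/-- Lemma 2.3 of the paper: with
`f₂[u](x) = (ω(x)·∇u(x) + β(u(x)) |∇u(x)|^(2−γ))₋`, `|ω| ≤ W` a.e. on `Ω`,
`|β| ≤ M`, and `γ ∈ (1,2]`,
`‖f₂[u]‖_{L²(Ω)} ≤ √2 (W ‖∇u‖_{L²(Ω)} + M |Ω|^((γ−1)/2) ‖∇u‖_{L²(Ω)}^(2−γ))`. -/
theorem convective_term_L2_bound (n : ℕ) (Ω : Set (EuclideanSpace ℝ (Fin n)))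
    (hΩ : MeasurableSet Ω) (hΩfin : volume Ω < ⊤)
    (γ W M : ℝ) (hγ₁ : 1 < γ) (hγ₂ : γ ≤ 2) (hW : 0 ≤ W) (hM : 0 ≤ M)
    (ω : EuclideanSpace ℝ (Fin n) → EuclideanSpace ℝ (Fin n))
    (hωm : AEMeasurable ω (volume.restrict Ω))
    (hω : ∀ᵐ x ∂(volume.restrict Ω), ‖ω x‖ ≤ W)
    (β : ℝ → ℝ) (hβ : ∀ s, |β s| ≤ M)
    (u : EuclideanSpace ℝ (Fin n) → ℝ)
    (hu : ∀ x ∈ Ω, DifferentiableAt ℝ u x)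
    (hu2 : IntegrableOn (fun x => ‖gradient u x‖ ^ 2) Ω) :
    (∫ x in Ω,
        (max (-((inner ℝ (ω x) (gradient u x) : ℝ) +
          β (u x) * ‖gradient u x‖ ^ (2 - γ))) 0) ^ 2) ^ ((1 : ℝ) / 2) ≤
      Real.sqrt 2 *
        (W * (∫ x in Ω, ‖gradient u x‖ ^ 2) ^ ((1 : ℝ) / 2) +
          M * (volume Ω).toReal ^ ((γ - 1) / 2) *
            ((∫ x in Ω, ‖gradient u x‖ ^ 2) ^ ((1 : ℝ) / 2)) ^ (2 - γ)) :=
  convective_term_L2_bound_general n Ω hΩfin γ W M hγ₁ hγ₂ hW hM ω hω β hβ u hu2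
end

section
/- Let Ω ⊆ ℝⁿ be a measurable set of finite Lebesgue measure |Ω|, let γ ∈ (1,2), let ω : Ω → ℝⁿ be measurable with |ω(x)| ≤ W a.e., and let β : ℝ → ℝ satisfy |β(s)| ≤ M and |β(s) − β(r)| ≤ L|s − r| for all s, r. Define, for u : ℝⁿ → ℝ differentiable at every point of Ω, f₂[u](x) := (ω(x)·∇u(x) + β(u(x)) |∇u(x)|^{2−γ})₋. Then there exists a constant C > 0, depending only on |Ω|, W, M, L, and γ, such that for every u, v : ℝⁿ → ℝ differentiable at every point of Ω with ∫_Ω |∇u|², ∫_Ω |∇v|², ∫_Ω |u − v|² all finite, one has ‖f₂[u] − f₂[v]‖_{L²(Ω)} ≤ C ( ‖∇u − ∇v‖_{L²(Ω)} + ‖∇u − ∇v‖_{L²(Ω)}^{2−γ} + ‖∇u‖_{L²(Ω)}^{2−γ} ‖u − v‖_{L²(Ω)}^{γ−1} ). -/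
/-!
Put `p = 2 - γ`, `q = γ - 1` and `F(w, s, g) = (w·g + β(s)|g|^p)₋`
(`convectiveTerm p β w s g`), so that `f₂[u](x) = F(ω(x), u(x), ∇u(x))`. Since `t ↦ t₋` is
1-Lipschitz and `| |g|^p - |h|^p | ≤ |g - h|^p` for `p ≤ 1`, `|F(w, s, g) - F(w, r, h)|` is at most
`W|g - h| + M|g - h|^p + |β(s) - β(r)| |g|^p`, and a bounded Lipschitz `β` satisfies
`|β(s) - β(r)| ≤ min(2M, L|s - r|) ≤ (2M)^p (L|s - r|)^q`.
Taking `L²(Ω)` norms, Minkowski's inequality splits the bound into three terms: `W‖∇u - ∇v‖`,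
a term controlled by `|Ω|^(q/2) ‖∇u - ∇v‖^p` (comparison of `L^(2p)` with `L²` on a finite
measure space), and one controlled by `‖∇u‖^p ‖u - v‖^q` (Hölder with exponents `2/p`, `2/q`).
-/

open MeasureTheory Real
open scoped ENNReal

namespace Real

lemma abs_rpow_sub_rpow_le {x y p : ℝ} (hx : 0 ≤ x) (hy : 0 ≤ y) (hp : 0 ≤ p) (hp1 : p ≤ 1) :
    |x ^ p - y ^ p| ≤ |x - y| ^ p := by
  wlog hyx : y ≤ x generalizing x y
  · rw [abs_sub_comm, abs_sub_comm x y]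
    exact this hy hx (le_of_not_ge hyx)
  have hsub : x ^ p ≤ (x - y) ^ p + y ^ p := by
    simpa using rpow_add_le_add_rpow (sub_nonneg.2 hyx) hy hp hp1
  rw [abs_of_nonneg (sub_nonneg.2 hyx), abs_of_nonneg (sub_nonneg.2 (rpow_le_rpow hy hyx hp))]
  linarith

lemma min_le_rpow_mul_rpow {a b p q : ℝ} (ha : 0 ≤ a) (hb : 0 ≤ b) (hp : 0 ≤ p) (hq : 0 ≤ q)
    (hpq : p + q = 1) : min a b ≤ a ^ p * b ^ q :=
  calc min a b = min a b ^ p * min a b ^ q := by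
        rw [← rpow_add' (le_min ha hb) (by simp [hpq]), hpq, rpow_one]
    _ ≤ a ^ p * b ^ q := by gcongr <;> simp

end Real

lemma abs_sub_le_rpow_of_abs_le_of_lipschitz {β : ℝ → ℝ} {M L p q : ℝ} (hM : ∀ s, |β s| ≤ M)
    (hL : ∀ s r, |β s - β r| ≤ L * |s - r|) (hp : 0 ≤ p) (hq : 0 ≤ q) (hpq : p + q = 1)
    (s r : ℝ) : |β s - β r| ≤ (2 * M) ^ p * L ^ q * |s - r| ^ q := by
  have hM₀ : 0 ≤ M := (abs_nonneg _).trans (hM 0)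
  have hL₀ : 0 ≤ L := by simpa using (abs_nonneg _).trans (hL 1 0)
  have hbound : |β s - β r| ≤ 2 * M := by linarith [abs_sub (β s) (β r), hM s, hM r]
  calc |β s - β r| ≤ min (2 * M) (L * |s - r|) := le_min hbound (hL s r)
    _ ≤ (2 * M) ^ p * (L * |s - r|) ^ q :=
        Real.min_le_rpow_mul_rpow (by linarith) (by positivity) hp hq hpq
    _ = (2 * M) ^ p * L ^ q * |s - r| ^ q := by rw [mul_rpow hL₀ (abs_nonneg _), mul_assoc]

lemma measurable_gradient {F : Type*} [NormedAddCommGroup F] [InnerProductSpace ℝ F]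
    [CompleteSpace F] [MeasurableSpace F] [BorelSpace F] (f : F → ℝ) :
    Measurable (gradient f) :=
  (InnerProductSpace.toDual ℝ F).symm.continuous.measurable.comp (measurable_fderiv ℝ f)

lemma ENNReal.toReal_le_of_le_mul_add_mul_add_mul {x a b c A B D : ℝ≥0∞}
    (hx : x ≤ a * A + b * B + c * D) (ha : a ≠ ∞) (hb : b ≠ ∞) (hc : c ≠ ∞) (hA : A ≠ ∞)
    (hB : B ≠ ∞) (hD : D ≠ ∞) :
    x.toReal ≤ (a + b + c).toReal * (A.toReal + B.toReal + D.toReal) := by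
  have hle : x ≤ (a + b + c) * (A + B + D) := by
    refine hx.trans ?_
    rw [mul_add, mul_add]
    gcongr
    · exact le_add_right (le_add_right le_rfl)
    · exact le_add_right le_add_self
    · exact le_add_self
  calc x.toReal ≤ ((a + b + c) * (A + B + D)).toReal := ENNReal.toReal_mono (by finiteness) hle
    _ = (a + b + c).toReal * (A.toReal + B.toReal + D.toReal) := by
        rw [ENNReal.toReal_mul, ENNReal.toReal_add (by finiteness) hD, ENNReal.toReal_add hA hB]

section L2

variable {α E F : Type*} [MeasurableSpace α] {μ : Measure α}
  [NormedAddCommGroup E] [NormedAddCommGroup F]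

lemma eLpNorm_norm_rpow_le {f : α → E} (hf : AEStronglyMeasurable f μ) {r : ℝ≥0∞}
    {p : ℝ} (hp : 0 < p) (hp1 : p ≤ 1) :
    eLpNorm (fun x => ‖f x‖ ^ p) r μ ≤ μ Set.univ ^ ((1 - p) / r.toReal) * eLpNorm f r μ ^ p := by
  rw [eLpNorm_norm_rpow f hp]
  have hle : r * ENNReal.ofReal p ≤ r := mul_le_of_le_one_right' (ENNReal.ofReal_le_one.2 hp1)
  calc eLpNorm f (r * ENNReal.ofReal p) μ ^ p
      ≤ (eLpNorm f r μ * μ Set.univ ^ (1 / (r * ENNReal.ofReal p).toReal - 1 / r.toReal)) ^ p := by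
        gcongr
        exact eLpNorm_le_eLpNorm_mul_rpow_measure_univ hle hf
    _ = μ Set.univ ^ ((1 - p) / r.toReal) * eLpNorm f r μ ^ p := by
        rw [ENNReal.mul_rpow_of_nonneg _ _ hp.le, ← ENNReal.rpow_mul, mul_comm,
          ENNReal.toReal_mul, ENNReal.toReal_ofReal hp.le]
        congr 2
        rcases eq_or_ne r.toReal 0 with hr | hr
        · simp [hr]
        · field_simp

lemma eLpNorm_norm_rpow_mul_norm_rpow_le {f : α → E} {g : α → F}
    (hf : AEStronglyMeasurable (fun x => ‖f x‖) μ) (hg : AEStronglyMeasurable (fun x => ‖g x‖) μ)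
    {r : ℝ≥0∞} {p q : ℝ} (hp : 0 < p) (hq : 0 < q) (hpq : p + q = 1) :
    eLpNorm (fun x => ‖f x‖ ^ p * ‖g x‖ ^ q) r μ ≤ eLpNorm f r μ ^ p * eLpNorm g r μ ^ q := by
  have : ENNReal.HolderTriple (r / ENNReal.ofReal p) (r / ENNReal.ofReal q) r := by
    constructor
    rw [ENNReal.inv_div (by simp) (by simp [hp]), ENNReal.inv_div (by simp) (by simp [hq]),
      ENNReal.div_add_div_same, ← ENNReal.ofReal_add hp.le hq.le, hpq, ENNReal.ofReal_one,
      one_div]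
  calc eLpNorm (fun x => ‖f x‖ ^ p * ‖g x‖ ^ q) r μ
      ≤ eLpNorm (fun x => ‖f x‖ ^ p) (r / ENNReal.ofReal p) μ *
          eLpNorm (fun x => ‖g x‖ ^ q) (r / ENNReal.ofReal q) μ :=
        eLpNorm_smul_le_mul_eLpNorm (𝕜 := ℝ) (E := ℝ) (φ := fun x => ‖f x‖ ^ p)
          (f := fun x => ‖g x‖ ^ q)
          (hg.aemeasurable.pow_const q).aestronglyMeasurable
          (hf.aemeasurable.pow_const p).aestronglyMeasurable
    _ = eLpNorm f r μ ^ p * eLpNorm g r μ ^ q := by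
        rw [eLpNorm_norm_rpow _ hp, eLpNorm_norm_rpow _ hq,
          ENNReal.div_mul_cancel (by simp [hp]) (by simp),
          ENNReal.div_mul_cancel (by simp [hq]) (by simp)]

lemma toReal_eLpNorm_two_eq {f : α → E} (hf : AEStronglyMeasurable (fun x => ‖f x‖ ^ 2) μ) :
    (eLpNorm f 2 μ).toReal = (∫ x, ‖f x‖ ^ 2 ∂μ) ^ (1 / 2 : ℝ) := by
  rw [eLpNorm_eq_lintegral_rpow_enorm_toReal two_ne_zero ENNReal.ofNat_ne_top,
    ← ENNReal.toReal_rpow,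
    integral_eq_lintegral_of_nonneg_ae (ae_of_all _ fun x => by positivity) hf]
  simp [← ofReal_norm, ENNReal.ofReal_pow]

lemma integral_norm_sq_rpow_le_toReal_eLpNorm (f : α → E) :
    (∫ x, ‖f x‖ ^ 2 ∂μ) ^ (1 / 2 : ℝ) ≤ (eLpNorm f 2 μ).toReal := by
  by_cases hf : AEStronglyMeasurable (fun x => ‖f x‖ ^ 2) μ
  · exact (toReal_eLpNorm_two_eq hf).ge
  · rw [integral_non_aestronglyMeasurable hf, zero_rpow (by norm_num)]
    positivity

end L2

section Convective

variable {α E : Type*} [MeasurableSpace α] {μ : Measure α}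
  [NormedAddCommGroup E] [InnerProductSpace ℝ E]

noncomputable def convectiveTerm (p : ℝ) (β : ℝ → ℝ) (w : E) (s : ℝ) (g : E) : ℝ :=
  max (-(inner ℝ w g + β s * ‖g‖ ^ p)) 0

lemma abs_convectiveTerm_sub_le {β : ℝ → ℝ} {W M L p q : ℝ} (hM : ∀ s, |β s| ≤ M)
    (hL : ∀ s r, |β s - β r| ≤ L * |s - r|) (hp : 0 ≤ p) (hq : 0 ≤ q) (hpq : p + q = 1)
    {w : E} (hw : ‖w‖ ≤ W) (s r : ℝ) (g h : E) :
    |convectiveTerm p β w s g - convectiveTerm p β w r h| ≤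
      W * ‖g - h‖ + M * ‖g - h‖ ^ p + (2 * M) ^ p * L ^ q * (‖g‖ ^ p * |s - r| ^ q) := by
  have hdiff : (inner ℝ w g + β s * ‖g‖ ^ p) - (inner ℝ w h + β r * ‖h‖ ^ p) =
      inner ℝ w (g - h) + (β s - β r) * ‖g‖ ^ p + β r * (‖g‖ ^ p - ‖h‖ ^ p) := by
    rw [inner_sub_right]; ring
  have hinner : |inner ℝ w (g - h)| ≤ W * ‖g - h‖ :=
    (abs_real_inner_le_norm _ _).trans (by gcongr)
  have hβ : |(β s - β r) * ‖g‖ ^ p| ≤ (2 * M) ^ p * L ^ q * |s - r| ^ q * ‖g‖ ^ p := by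
    rw [abs_mul, abs_of_nonneg (rpow_nonneg (norm_nonneg g) p)]
    exact mul_le_mul_of_nonneg_right (abs_sub_le_rpow_of_abs_le_of_lipschitz hM hL hp hq hpq s r)
      (rpow_nonneg (norm_nonneg g) p)
  have hpow : |β r * (‖g‖ ^ p - ‖h‖ ^ p)| ≤ M * ‖g - h‖ ^ p := by
    rw [abs_mul]
    gcongr
    · exact (abs_nonneg _).trans (hM 0)
    · exact hM r
    · exact (Real.abs_rpow_sub_rpow_le (norm_nonneg _) (norm_nonneg _) hp (by linarith)).trans
        (rpow_le_rpow (abs_nonneg _) (abs_norm_sub_norm_le g h) hp)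
  calc |convectiveTerm p β w s g - convectiveTerm p β w r h|
      ≤ |(inner ℝ w g + β s * ‖g‖ ^ p) - (inner ℝ w h + β r * ‖h‖ ^ p)| :=
        (abs_max_sub_max_le_abs _ _ (0 : ℝ)).trans_eq (by rw [neg_sub_neg, abs_sub_comm])
    _ ≤ |inner ℝ w (g - h)| + |(β s - β r) * ‖g‖ ^ p| + |β r * (‖g‖ ^ p - ‖h‖ ^ p)| := by
        rw [hdiff]; exact abs_add_three _ _ _
    _ ≤ _ := by linarith

theorem eLpNorm_convectiveTerm_sub_le {β : ℝ → ℝ} {W M L p q : ℝ} (hM : ∀ s, |β s| ≤ M)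
    (hL : ∀ s r, |β s - β r| ≤ L * |s - r|) (hp : 0 < p) (hq : 0 < q) (hpq : p + q = 1)
    {ω : α → E} (hω : ∀ᵐ x ∂μ, ‖ω x‖ ≤ W) {u v : α → ℝ}
    (huv : AEStronglyMeasurable (fun x => ‖u x - v x‖) μ) {gu gv : α → E}
    (hgu : AEStronglyMeasurable gu μ) (hgv : AEStronglyMeasurable gv μ) :
    eLpNorm (fun x => convectiveTerm p β (ω x) (u x) (gu x) -
        convectiveTerm p β (ω x) (v x) (gv x)) 2 μ ≤
      ‖W‖ₑ * eLpNorm (fun x => gu x - gv x) 2 μ +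
        ‖M‖ₑ * μ Set.univ ^ (q / 2) * eLpNorm (fun x => gu x - gv x) 2 μ ^ p +
        ‖(2 * M) ^ p * L ^ q‖ₑ * (eLpNorm gu 2 μ ^ p * eLpNorm (fun x => u x - v x) 2 μ ^ q) := by
  set K := (2 * M) ^ p * L ^ q
  have hd : AEStronglyMeasurable (fun x => gu x - gv x) μ := hgu.sub hgv
  have hdp : AEStronglyMeasurable (fun x => ‖gu x - gv x‖ ^ p) μ :=
    (hd.norm.aemeasurable.pow_const p).aestronglyMeasurable
  have hprod : AEStronglyMeasurable (fun x => ‖gu x‖ ^ p * ‖u x - v x‖ ^ q) μ :=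
    ((hgu.norm.aemeasurable.pow_const p).mul (huv.aemeasurable.pow_const q)).aestronglyMeasurable
  calc _ ≤ eLpNorm ((W • fun x => ‖gu x - gv x‖) + (M • fun x => ‖gu x - gv x‖ ^ p) +
        K • fun x => ‖gu x‖ ^ p * ‖u x - v x‖ ^ q) 2 μ :=
        eLpNorm_mono_ae_real <| hω.mono fun x hx =>
          abs_convectiveTerm_sub_le hM hL hp.le hq.le hpq hx _ _ _ _
    _ ≤ eLpNorm (W • fun x => ‖gu x - gv x‖) 2 μ + eLpNorm (M • fun x => ‖gu x - gv x‖ ^ p) 2 μ +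
        eLpNorm (K • fun x => ‖gu x‖ ^ p * ‖u x - v x‖ ^ q) 2 μ :=
        (eLpNorm_add_le ((hd.norm.const_smul W).add (hdp.const_smul M)) (hprod.const_smul K)
          one_le_two).trans (add_le_add_left (eLpNorm_add_le (hd.norm.const_smul W)
            (hdp.const_smul M) one_le_two) _)
    _ = ‖W‖ₑ * eLpNorm (fun x => gu x - gv x) 2 μ +
        ‖M‖ₑ * eLpNorm (fun x => ‖gu x - gv x‖ ^ p) 2 μ +
        ‖K‖ₑ * eLpNorm (fun x => ‖gu x‖ ^ p * ‖u x - v x‖ ^ q) 2 μ := by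
        simp only [eLpNorm_const_smul, eLpNorm_norm]
    _ ≤ _ := by
        have hexp : (1 - p) / (2 : ℝ≥0∞).toReal = q / 2 := by simp; linarith
        rw [mul_assoc _ (μ Set.univ ^ _), ← hexp]
        gcongr
        · exact eLpNorm_norm_rpow_le hd hp (by linarith)
        · exact eLpNorm_norm_rpow_mul_norm_rpow_le (g := fun x => u x - v x) hgu.norm huv hp hq hpq

theorem integral_convectiveTerm_sub_sq_rpow_le [IsFiniteMeasure μ] {β : ℝ → ℝ} {W M L p q : ℝ}
    (hM : ∀ s, |β s| ≤ M) (hL : ∀ s r, |β s - β r| ≤ L * |s - r|) (hp : 0 < p) (hq : 0 < q)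
    (hpq : p + q = 1) {ω : α → E} (hω : ∀ᵐ x ∂μ, ‖ω x‖ ≤ W) {u v : α → ℝ} {gu gv : α → E}
    (hgu : AEStronglyMeasurable gu μ) (hgv : AEStronglyMeasurable gv μ)
    (hIu : Integrable (fun x => ‖gu x‖ ^ 2) μ) (hIv : Integrable (fun x => ‖gv x‖ ^ 2) μ)
    (hIuv : Integrable (fun x => (u x - v x) ^ 2) μ) :
    (∫ x, (convectiveTerm p β (ω x) (u x) (gu x) -
        convectiveTerm p β (ω x) (v x) (gv x)) ^ 2 ∂μ) ^ (1 / 2 : ℝ) ≤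
      (‖W‖ₑ + ‖M‖ₑ * μ Set.univ ^ (q / 2) + ‖(2 * M) ^ p * L ^ q‖ₑ).toReal *
        ((∫ x, ‖gu x - gv x‖ ^ 2 ∂μ) ^ (1 / 2 : ℝ) +
          ((∫ x, ‖gu x - gv x‖ ^ 2 ∂μ) ^ (1 / 2 : ℝ)) ^ p +
          ((∫ x, ‖gu x‖ ^ 2 ∂μ) ^ (1 / 2 : ℝ)) ^ p *
            ((∫ x, (u x - v x) ^ 2 ∂μ) ^ (1 / 2 : ℝ)) ^ q) := by
  have huv : AEStronglyMeasurable (fun x => ‖u x - v x‖) μ := by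
    simpa [Real.sqrt_sq_eq_abs] using
      Real.continuous_sqrt.comp_aestronglyMeasurable hIuv.aestronglyMeasurable
  have hgu2 := (memLp_two_iff_integrable_sq_norm hgu).2 hIu
  have hgv2 := (memLp_two_iff_integrable_sq_norm hgv).2 hIv
  have hd2 := (hgu2.sub hgv2).eLpNorm_ne_top
  have hu2 := hgu2.eLpNorm_ne_top
  have huv2 : eLpNorm (fun x => u x - v x) 2 μ ≠ ∞ := by
    rw [← eLpNorm_norm]
    refine ((memLp_two_iff_integrable_sq_norm huv).2 ?_).eLpNorm_ne_top
    simpa only [Real.norm_eq_abs, sq_abs] using hIuv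
  have hvol : μ Set.univ ^ (q / 2) ≠ ∞ :=
    ENNReal.rpow_ne_top_of_nonneg (by positivity) (measure_ne_top μ _)
  have hbound := ENNReal.toReal_le_of_le_mul_add_mul_add_mul
    (eLpNorm_convectiveTerm_sub_le hM hL hp hq hpq hω huv hgu hgv) (by finiteness)
    (by finiteness) (by finiteness) hd2 (by finiteness) (by finiteness)
  have hF := integral_norm_sq_rpow_le_toReal_eLpNorm (μ := μ) fun x =>
    convectiveTerm p β (ω x) (u x) (gu x) - convectiveTerm p β (ω x) (v x) (gv x)
  have hd := toReal_eLpNorm_two_eq (f := fun x => gu x - gv x) ((hgu.sub hgv).norm.pow 2)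
  have hg := toReal_eLpNorm_two_eq (hgu.norm.pow 2)
  have he := toReal_eLpNorm_two_eq (f := fun x => u x - v x) (huv.pow 2)
  simp only [Real.norm_eq_abs, sq_abs] at hF he
  simp only [ENNReal.toReal_mul, ← ENNReal.toReal_rpow, hd, hg, he] at hbound
  exact hF.trans hbound

end Convective

theorem convective_term_holder_continuity_general (n : ℕ) (Ω : Set (EuclideanSpace ℝ (Fin n)))
    (hΩfin : volume Ω < ⊤)
    (γ W M L : ℝ) (hγ₁ : 1 < γ) (hγ₂ : γ < 2) :
    ∃ C > 0, ∀ (ω : EuclideanSpace ℝ (Fin n) → EuclideanSpace ℝ (Fin n))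
      (β : ℝ → ℝ) (u v : EuclideanSpace ℝ (Fin n) → ℝ),
      AEMeasurable ω (volume.restrict Ω) →
      (∀ᵐ x ∂(volume.restrict Ω), ‖ω x‖ ≤ W) →
      (∀ s, |β s| ≤ M) → (∀ s r, |β s - β r| ≤ L * |s - r|) →
      (∀ x ∈ Ω, DifferentiableAt ℝ u x) → (∀ x ∈ Ω, DifferentiableAt ℝ v x) →
      IntegrableOn (fun x => ‖gradient u x‖ ^ 2) Ω →
      IntegrableOn (fun x => ‖gradient v x‖ ^ 2) Ω →
      IntegrableOn (fun x => (u x - v x) ^ 2) Ω →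
      (∫ x in Ω,
          ((max (-((inner ℝ (ω x) (gradient u x) : ℝ) +
              β (u x) * ‖gradient u x‖ ^ (2 - γ))) 0) -
            (max (-((inner ℝ (ω x) (gradient v x) : ℝ) +
              β (v x) * ‖gradient v x‖ ^ (2 - γ))) 0)) ^ 2) ^ ((1 : ℝ) / 2) ≤
        C * ((∫ x in Ω, ‖gradient u x - gradient v x‖ ^ 2) ^ ((1 : ℝ) / 2) +
          ((∫ x in Ω, ‖gradient u x - gradient v x‖ ^ 2) ^ ((1 : ℝ) / 2)) ^ (2 - γ) +
          ((∫ x in Ω, ‖gradient u x‖ ^ 2) ^ ((1 : ℝ) / 2)) ^ (2 - γ) *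
            ((∫ x in Ω, (u x - v x) ^ 2) ^ ((1 : ℝ) / 2)) ^ (γ - 1)) := by
  have : IsFiniteMeasure (volume.restrict Ω) := isFiniteMeasure_restrict.2 hΩfin.ne
  refine ⟨(‖W‖ₑ + ‖M‖ₑ * volume.restrict Ω Set.univ ^ ((γ - 1) / 2) +
    ‖(2 * M) ^ (2 - γ) * L ^ (γ - 1)‖ₑ).toReal + 1, by positivity, ?_⟩
  intro ω β u v _ hω hM hL _ _ hIu hIv hIuv
  have hmain := integral_convectiveTerm_sub_sq_rpow_le (p := 2 - γ) (q := γ - 1) hM hL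
    (by linarith) (by linarith) (by ring) hω (measurable_gradient u).aestronglyMeasurable
    (measurable_gradient v).aestronglyMeasurable hIu hIv hIuv
  simp only [convectiveTerm] at hmain
  refine hmain.trans (mul_le_mul_of_nonneg_right (by linarith) ?_)
  positivity

/-- Lemma 2.5 of the paper, case `γ ∈ (1,2)`: with
`f₂[w](x) = (ω(x)·∇w(x) + β(w(x)) |∇w(x)|^(2−γ))₋`, there is a constant `C > 0`,
depending only on `|Ω|`, `W`, `M`, `L`, `γ`, such that for all admissible `u, v`,
`‖f₂[u] − f₂[v]‖_{L²(Ω)} ≤ C (‖∇u − ∇v‖_{L²} + ‖∇u − ∇v‖_{L²}^(2−γ)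
  + ‖∇u‖_{L²}^(2−γ) ‖u − v‖_{L²}^(γ−1))`. -/
theorem convective_term_holder_continuity (n : ℕ) (Ω : Set (EuclideanSpace ℝ (Fin n)))
    (hΩ : MeasurableSet Ω) (hΩfin : volume Ω < ⊤)
    (γ W M L : ℝ) (hγ₁ : 1 < γ) (hγ₂ : γ < 2) :
    ∃ C > 0, ∀ (ω : EuclideanSpace ℝ (Fin n) → EuclideanSpace ℝ (Fin n))
      (β : ℝ → ℝ) (u v : EuclideanSpace ℝ (Fin n) → ℝ),
      AEMeasurable ω (volume.restrict Ω) →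
      (∀ᵐ x ∂(volume.restrict Ω), ‖ω x‖ ≤ W) →
      (∀ s, |β s| ≤ M) → (∀ s r, |β s - β r| ≤ L * |s - r|) →
      (∀ x ∈ Ω, DifferentiableAt ℝ u x) → (∀ x ∈ Ω, DifferentiableAt ℝ v x) →
      IntegrableOn (fun x => ‖gradient u x‖ ^ 2) Ω →
      IntegrableOn (fun x => ‖gradient v x‖ ^ 2) Ω →
      IntegrableOn (fun x => (u x - v x) ^ 2) Ω →
      (∫ x in Ω,
          ((max (-((inner ℝ (ω x) (gradient u x) : ℝ) +
              β (u x) * ‖gradient u x‖ ^ (2 - γ))) 0) -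
            (max (-((inner ℝ (ω x) (gradient v x) : ℝ) +
              β (v x) * ‖gradient v x‖ ^ (2 - γ))) 0)) ^ 2) ^ ((1 : ℝ) / 2) ≤
        C * ((∫ x in Ω, ‖gradient u x - gradient v x‖ ^ 2) ^ ((1 : ℝ) / 2) +
          ((∫ x in Ω, ‖gradient u x - gradient v x‖ ^ 2) ^ ((1 : ℝ) / 2)) ^ (2 - γ) +
          ((∫ x in Ω, ‖gradient u x‖ ^ 2) ^ ((1 : ℝ) / 2)) ^ (2 - γ) *
            ((∫ x in Ω, (u x - v x) ^ 2) ^ ((1 : ℝ) / 2)) ^ (γ - 1)) :=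
  convective_term_holder_continuity_general n Ω hΩfin γ W M L hγ₁ hγ₂
end
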